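/- Let L ≥ 1 and let d₀, d₁, …, d_L be positive integers with d_L = K. For p = 1,…,L let W⁽ᵖ⁾ ∈ ℝ^{d_p × d_{p−1}}, let x = x⁽¹⁾ ∈ ℝ^{d₀}, define z⁽ᵖ⁾ = W⁽ᵖ⁾x⁽ᵖ⁾ and x⁽ᵖ⁺¹⁾ = D⁽ᵖ⁾z⁽ᵖ⁾ with D⁽ᵖ⁾ = diag(𝟙[z⁽ᵖ⁾ ≥ 0]). Set G⁽ᴸ⁾ = I_K and G⁽ᵖ⁾ = W⁽ᴸ⁾D⁽ᴸ⁻¹⁾W⁽ᴸ⁻¹⁾⋯W⁽ᵖ⁺¹⁾D⁽ᵖ⁾ for p < L, and let F be the matrix with K rows whose transpose Fᵀ stacks vertically, for p = 1,…,L, the blocks (G⁽ᵖ⁾)ᵀ ⊗ x⁽ᵖ⁾ and (G⁽ᵖ⁾)ᵀ. Let p ∈ ℝ^K be a probability vector and A = diag(p) − ppᵀ. Then ‖FᵀAF‖₂ ≤ √2 · ∑_{p=1}^{L} (‖x⁽ᵖ⁾‖₂² + 1) · ∏_{s=p+1}^{L} ‖W⁽ˢ⁾‖₂². -/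

import Mathlib

open Matrix BigOperators

/-- The spectral norm (ℓ² operator norm) of a real matrix. -/
noncomputable def l2SpectralNorm {m n : Type*} [Fintype m] [Fintype n] [DecidableEq n]
    (A : Matrix m n ℝ) : ℝ :=
  ‖LinearMap.toContinuousLinearMap (Matrix.toEuclideanLin A)‖

/-- The Euclidean norm of a real vector. -/
noncomputable def eNorm {n : Type*} [Fintype n] (x : n → ℝ) : ℝ :=
  Real.sqrt (∑ i, x i ^ 2)

/-!
Since `Ft * A * Ftᵀ` is a congruence, `‖Ft A Ftᵀ‖ ≤ ‖A‖ ‖Ft‖²`. The Frobenius norm of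
`A = diag p - p pᵀ` is at most `√(∑ pᵢ² + (∑ pᵢ²)²) ≤ √2`. The squared norm of the row-stacked
`Ft` is at most the sum of the squared norms of its blocks, and the block of layer `ℓ`, which
stacks `Gᵀ ⊗ x` on `Gᵀ`, has squared norm at most `(‖x‖² + 1) ‖G‖²`. Finally the backward
recursion `G⁽ᵖ⁾ = G⁽ᵖ⁺¹⁾ W⁽ᵖ⁺¹⁾ D⁽ᵖ⁾` with `‖D⁽ᵖ⁾‖ ≤ 1` gives `‖G⁽ᵖ⁾‖ ≤ ∏_{s > p} ‖W⁽ˢ⁾‖`.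
-/

open scoped Matrix.Norms.L2Operator

theorem l2SpectralNorm_eq_l2_opNorm {m n : Type*} [Fintype m] [Fintype n] [DecidableEq n]
    (A : Matrix m n ℝ) : l2SpectralNorm A = ‖A‖ := rfl

theorem eNorm_sq {n : Type*} [Fintype n] (x : n → ℝ) : eNorm x ^ 2 = ∑ i, x i ^ 2 :=
  Real.sq_sqrt (by positivity)

namespace Matrix

variable {m n k : Type*} [Fintype m] [Fintype n] [Fintype k] [DecidableEq n]

theorem sum_sq_mulVec_le_l2_opNorm_sq (A : Matrix m n ℝ) (v : n → ℝ) :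
    ∑ i, (A *ᵥ v) i ^ 2 ≤ ‖A‖ ^ 2 * ∑ j, v j ^ 2 := by
  have h := A.l2_opNorm_mulVec (WithLp.toLp 2 v)
  rw [← sq_le_sq₀ (norm_nonneg _) (by positivity), mul_pow,
    EuclideanSpace.real_norm_sq_eq, EuclideanSpace.real_norm_sq_eq] at h
  simpa using h

theorem l2_opNorm_sq_le_of_sum_sq_mulVec_le (A : Matrix m n ℝ) {c : ℝ} (hc : 0 ≤ c)
    (h : ∀ v, ∑ i, (A *ᵥ v) i ^ 2 ≤ c * ∑ j, v j ^ 2) : ‖A‖ ^ 2 ≤ c := by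
  suffices ‖A‖ ≤ √c from
    (sq_le_sq₀ (norm_nonneg _) (Real.sqrt_nonneg c)).2 this |>.trans_eq (Real.sq_sqrt hc)
  rw [l2_opNorm_def]
  refine ContinuousLinearMap.opNorm_le_bound _ (Real.sqrt_nonneg c) fun x => ?_
  rw [← sq_le_sq₀ (norm_nonneg _) (by positivity), mul_pow, Real.sq_sqrt hc,
    EuclideanSpace.real_norm_sq_eq, EuclideanSpace.real_norm_sq_eq]
  exact h x

theorem l2_opNorm_sq_le_sum_sq (A : Matrix m n ℝ) : ‖A‖ ^ 2 ≤ ∑ i, ∑ j, A i j ^ 2 := by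
  refine A.l2_opNorm_sq_le_of_sum_sq_mulVec_le (by positivity) fun v => ?_
  rw [Finset.sum_mul]
  exact Finset.sum_le_sum fun i _ => Finset.sum_mul_sq_le_sq_mul_sq _ _ _

theorem l2_opNorm_diagonal_le_one (v : n → ℝ) (hv : ∀ i, |v i| ≤ 1) : ‖diagonal v‖ ≤ 1 := by
  rw [l2_opNorm_diagonal]
  exact (pi_norm_le_iff_of_nonneg zero_le_one).2 hv

theorem l2_opNorm_transpose [DecidableEq m] (A : Matrix m n ℝ) : ‖Aᵀ‖ = ‖A‖ := by
  rw [← conjTranspose_eq_transpose_of_trivial, l2_opNorm_conjTranspose]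

theorem l2_opNorm_mul_mul_transpose_le [DecidableEq m] (B : Matrix m n ℝ) (A : Matrix n n ℝ) :
    ‖B * A * Bᵀ‖ ≤ ‖A‖ * ‖B‖ ^ 2 :=
  calc ‖B * A * Bᵀ‖ ≤ ‖B‖ * ‖A‖ * ‖Bᵀ‖ := (l2_opNorm_mul _ _).trans <|
        mul_le_mul_of_nonneg_right (l2_opNorm_mul _ _) (norm_nonneg _)
    _ = ‖A‖ * ‖B‖ ^ 2 := by rw [l2_opNorm_transpose]; ring

omit [DecidableEq n] in
theorem sum_sq_le_one_of_mem_stdSimplex {p : n → ℝ} (hp : p ∈ stdSimplex ℝ n) :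
    ∑ i, p i ^ 2 ≤ 1 := by
  obtain ⟨hp0, hp1⟩ := hp
  calc ∑ i, p i ^ 2 ≤ ∑ i, p i := Finset.sum_le_sum fun i _ => by
        have : p i ≤ 1 := hp1 ▸ Finset.single_le_sum (fun j _ => hp0 j) (Finset.mem_univ i)
        nlinarith [hp0 i]
    _ = 1 := hp1

theorem l2_opNorm_diagonal_sub_vecMulVec_le_sqrt_two {p : n → ℝ} (hp : p ∈ stdSimplex ℝ n) :
    ‖diagonal p - vecMulVec p p‖ ≤ √2 := by
  have hs := sum_sq_le_one_of_mem_stdSimplex hp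
  refine Real.le_sqrt_of_sq_le <| (l2_opNorm_sq_le_sum_sq _).trans ?_
  calc ∑ i, ∑ j, (diagonal p - vecMulVec p p) i j ^ 2
      ≤ ∑ i, ∑ j, (diagonal p i j ^ 2 + (p i * p j) ^ 2) := by
        refine Finset.sum_le_sum fun i _ => Finset.sum_le_sum fun j _ => ?_
        -- `(a - b)² ≤ a² + b²` as soon as `a b ≥ 0`
        have : 0 ≤ diagonal p i j * (p i * p j) := by
          by_cases h : i = j <;> simp [h, hp.1 _, mul_nonneg]
        simp only [sub_apply, vecMulVec_apply]
        nlinarith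
    _ = ∑ i, p i ^ 2 + (∑ i, p i ^ 2) ^ 2 := by
        have hdiag : ∑ i, ∑ j, diagonal p i j ^ 2 = ∑ i, p i ^ 2 := by simp [diagonal_apply]
        have hrank1 : ∑ i, ∑ j, (p i * p j) ^ 2 = (∑ i, p i ^ 2) ^ 2 := by
          simp only [sq, Finset.sum_mul_sum]
          exact Finset.sum_congr rfl fun i _ => Finset.sum_congr rfl fun j _ => by ring
        simp only [Finset.sum_add_distrib, hdiag, hrank1]
    _ ≤ 2 := by nlinarith [Finset.sum_nonneg fun i (_ : i ∈ Finset.univ) => sq_nonneg (p i)]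

theorem l2_opNorm_sq_le_sum_submatrix_sigma {ι : Type*} [Fintype ι] {β : ι → Type*}
    [∀ ℓ, Fintype (β ℓ)] (M : Matrix (Σ ℓ, β ℓ) n ℝ) :
    ‖M‖ ^ 2 ≤ ∑ ℓ, ‖M.submatrix (Sigma.mk ℓ) id‖ ^ 2 := by
  refine M.l2_opNorm_sq_le_of_sum_sq_mulVec_le (by positivity) fun v => ?_
  rw [← Finset.univ_sigma_univ, Finset.sum_sigma, Finset.sum_mul]
  exact Finset.sum_le_sum fun ℓ _ => sum_sq_mulVec_le_l2_opNorm_sq _ v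

/-- `B ⊗ x` for a vector `x` viewed as a one-column matrix, with the column index `n × Unit`
collapsed to `n`. -/
def kroneckerVec (B : Matrix m n ℝ) (x : k → ℝ) : Matrix (m × k) n ℝ :=
  of fun p j => B p.1 j * x p.2

omit [DecidableEq n] in
theorem sum_sq_kroneckerVec_mulVec (B : Matrix m n ℝ) (x : k → ℝ) (v : n → ℝ) :
    ∑ p, (kroneckerVec B x *ᵥ v) p ^ 2 = (∑ a, x a ^ 2) * ∑ i, (B *ᵥ v) i ^ 2 := by
  have : ∀ p : m × k, (kroneckerVec B x *ᵥ v) p = x p.2 * (B *ᵥ v) p.1 := fun p => by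
    simp only [kroneckerVec, mulVec, dotProduct, of_apply, Finset.mul_sum]
    exact Finset.sum_congr rfl fun j _ => by ring
  simp only [this, mul_pow, Fintype.sum_prod_type, ← Finset.mul_sum, ← Finset.sum_mul]

theorem l2_opNorm_sq_fromRows_kroneckerVec_le (B : Matrix m n ℝ) (x : k → ℝ) :
    ‖fromRows (kroneckerVec B x) B‖ ^ 2 ≤ (∑ a, x a ^ 2 + 1) * ‖B‖ ^ 2 := by
  refine l2_opNorm_sq_le_of_sum_sq_mulVec_le _ (by positivity) fun v => ?_
  rw [fromRows_mulVec, Fintype.sum_sum_type]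
  simp only [Sum.elim_inl, Sum.elim_inr, sum_sq_kroneckerVec_mulVec]
  have := sum_sq_mulVec_le_l2_opNorm_sq B v
  calc _ = (∑ a, x a ^ 2 + 1) * ∑ i, (B *ᵥ v) i ^ 2 := by ring
    _ ≤ _ := by rw [mul_assoc]; gcongr

theorem l2_opNorm_le_prod_of_backward_recursion {ι : ℕ → Type*} [∀ q, Fintype (ι q)]
    [∀ q, DecidableEq (ι q)] {L : ℕ} (W : ∀ q, Matrix (ι (q + 1)) (ι q) ℝ)
    (D : ∀ q, Matrix (ι (q + 1)) (ι (q + 1)) ℝ) (G : ∀ q, Matrix (ι L) (ι q) ℝ)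
    (hGL : ‖G L‖ ≤ 1) (hG : ∀ q, q + 1 < L → G (q + 1) = G (q + 2) * W (q + 1) * D q)
    (hD : ∀ q, q + 1 < L → ‖D q‖ ≤ 1) {q : ℕ} (hq : q ≤ L) (hq1 : 1 ≤ q) :
    ‖G q‖ ≤ ∏ s ∈ Finset.Ico q L, ‖W s‖ := by
  induction hq using Nat.decreasingInduction with
  | self => simpa using hGL
  | of_succ k hk ih =>
    obtain ⟨q, rfl⟩ : ∃ q, k = q + 1 := ⟨k - 1, by omega⟩
    rw [hG q hk, Finset.prod_eq_prod_Ico_succ_bot hk]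
    calc ‖G (q + 2) * W (q + 1) * D q‖ ≤ ‖G (q + 2)‖ * ‖W (q + 1)‖ * ‖D q‖ :=
          (l2_opNorm_mul _ _).trans <|
            mul_le_mul_of_nonneg_right (l2_opNorm_mul _ _) (norm_nonneg _)
      _ ≤ (∏ s ∈ Finset.Ico (q + 2) L, ‖W s‖) * ‖W (q + 1)‖ * 1 :=
          mul_le_mul (mul_le_mul_of_nonneg_right (ih (by omega)) (norm_nonneg _)) (hD q hk)
            (norm_nonneg _) <|
              mul_nonneg (Finset.prod_nonneg fun _ _ => norm_nonneg _) (norm_nonneg _)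
      _ = _ := by ring

end Matrix

/-- Indexing: `W q`, `xv q`, `zv q`, `Dm q` are the paper's `W⁽q⁺¹⁾`, `x⁽q⁺¹⁾`, `z⁽q⁺¹⁾`,
`D⁽q⁺¹⁾`; `G q` is `G⁽q⁾` and `Ft` is `Fᵀ`. Layer `ℓ ∈ range L` is the paper's `p = ℓ + 1`. -/
theorem spectral_norm_G_term_hessian_blockwise_bound_general
    (L : ℕ)
    (d : ℕ → ℕ)
    (W : (q : ℕ) → Matrix (Fin (d (q + 1))) (Fin (d q)) ℝ)
    (xv : (q : ℕ) → Fin (d q) → ℝ)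
    (zv : (q : ℕ) → Fin (d (q + 1)) → ℝ)
    (Dm : (q : ℕ) → Matrix (Fin (d (q + 1))) (Fin (d (q + 1))) ℝ)
    (hD : ∀ q < L, Dm q = Matrix.diagonal fun i => if 0 ≤ zv q i then (1 : ℝ) else 0)
    (G : (q : ℕ) → Matrix (Fin (d L)) (Fin (d q)) ℝ)
    (hGL : G L = 1)
    (hG : ∀ q, q + 1 < L → G (q + 1) = G (q + 2) * W (q + 1) * Dm q)
    (Ft : Matrix ((ℓ : Fin L) × ((Fin (d (ℓ.1 + 1)) × Fin (d ℓ.1)) ⊕ Fin (d (ℓ.1 + 1))))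
      (Fin (d L)) ℝ)
    (hFt1 : ∀ (ℓ : Fin L) (i : Fin (d (ℓ.1 + 1))) (a : Fin (d ℓ.1)) (j : Fin (d L)),
      Ft ⟨ℓ, Sum.inl (i, a)⟩ j = (G (ℓ.1 + 1))ᵀ i j * xv ℓ.1 a)
    (hFt2 : ∀ (ℓ : Fin L) (i : Fin (d (ℓ.1 + 1))) (j : Fin (d L)),
      Ft ⟨ℓ, Sum.inr i⟩ j = (G (ℓ.1 + 1))ᵀ i j)
    (pv : Fin (d L) → ℝ) (hpv : ∀ j, 0 ≤ pv j) (hpsum : ∑ j, pv j = 1) :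
    l2SpectralNorm (Ft * (Matrix.diagonal pv - Matrix.vecMulVec pv pv) * Ftᵀ) ≤
      Real.sqrt 2 * ∑ ℓ ∈ Finset.range L,
        (eNorm (xv ℓ) ^ 2 + 1) * ∏ s ∈ Finset.Ico (ℓ + 1) L, l2SpectralNorm (W s) ^ 2 := by
  simp only [l2SpectralNorm_eq_l2_opNorm]
  have hDm : ∀ q, q + 1 < L → ‖Dm q‖ ≤ 1 := fun q hq => by
    rw [hD q (by omega)]
    exact l2_opNorm_diagonal_le_one _ fun i => by split_ifs <;> simp
  have hG1 : ‖G L‖ ≤ 1 := by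
    rw [hGL, ← diagonal_one]
    exact l2_opNorm_diagonal_le_one _ fun _ => by simp
  have hGW : ∀ ℓ < L, ‖G (ℓ + 1)‖ ^ 2 ≤ ∏ s ∈ Finset.Ico (ℓ + 1) L, ‖W s‖ ^ 2 := by
    intro ℓ hℓ
    rw [Finset.prod_pow]
    exact pow_le_pow_left₀ (norm_nonneg _) (l2_opNorm_le_prod_of_backward_recursion
      (ι := fun q => Fin (d q)) W Dm G hG1 hG hDm hℓ (by omega)) 2
  have hblock : ∀ ℓ : Fin L, Ft.submatrix (Sigma.mk ℓ) id =
      fromRows (kroneckerVec (G (ℓ.1 + 1))ᵀ (xv ℓ)) (G (ℓ.1 + 1))ᵀ := fun ℓ => by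
    ext (⟨i, a⟩ | i) j <;> simp [hFt1, hFt2, kroneckerVec]
  have hFt : ‖Ft‖ ^ 2 ≤ ∑ ℓ ∈ Finset.range L,
      (eNorm (xv ℓ) ^ 2 + 1) * ∏ s ∈ Finset.Ico (ℓ + 1) L, ‖W s‖ ^ 2 :=
    calc ‖Ft‖ ^ 2 ≤ ∑ ℓ : Fin L, ‖Ft.submatrix (Sigma.mk ℓ) id‖ ^ 2 :=
          l2_opNorm_sq_le_sum_submatrix_sigma Ft
      _ ≤ ∑ ℓ : Fin L, (eNorm (xv ℓ) ^ 2 + 1) * ∏ s ∈ Finset.Ico (ℓ.1 + 1) L, ‖W s‖ ^ 2 := by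
          refine Finset.sum_le_sum fun ℓ _ => ?_
          rw [hblock, eNorm_sq]
          refine (l2_opNorm_sq_fromRows_kroneckerVec_le _ _).trans ?_
          rw [l2_opNorm_transpose]
          exact mul_le_mul_of_nonneg_left (hGW ℓ ℓ.2) (by positivity)
      _ = _ := Fin.sum_univ_eq_sum_range
          (fun ℓ => (eNorm (xv ℓ) ^ 2 + 1) * ∏ s ∈ Finset.Ico (ℓ + 1) L, ‖W s‖ ^ 2) L
  calc _ ≤ ‖diagonal pv - vecMulVec pv pv‖ * ‖Ft‖ ^ 2 := l2_opNorm_mul_mul_transpose_le _ _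
    _ ≤ √2 * _ := mul_le_mul (l2_opNorm_diagonal_sub_vecMulVec_le_sqrt_two ⟨hpv, hpsum⟩) hFt
        (by positivity) (by positivity)

/-- **Main intermediate inequality of Theorem 1.**  With the same setup and
indexing conventions as in Theorem 1 (`W q` is the paper's `W⁽q⁺¹⁾`, `xv q` the
paper's `x⁽q⁺¹⁾`, `zv q` the paper's `z⁽q⁺¹⁾`, `Dm q` the paper's `D⁽q⁺¹⁾`,
`G q` the paper's `G⁽q⁾`, and `Ft` the paper's `Fᵀ`), the G-term Hessian
approximation satisfies
`‖Fᵀ A F‖₂ ≤ √2 ∑_{p=1}^{L} (‖x⁽ᵖ⁾‖₂² + 1) ∏_{s=p+1}^{L} ‖W⁽ˢ⁾‖₂²`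
(paper sum index `p = ℓ+1` for Lean `ℓ ∈ range L`; paper product index
`s` corresponds to Lean `s - 1 ∈ Ico (ℓ+1) L`). -/
theorem spectral_norm_G_term_hessian_blockwise_bound
    (L : ℕ) (hL : 1 ≤ L)
    (d : ℕ → ℕ) (hd : ∀ q ≤ L, 0 < d q)
    (W : (q : ℕ) → Matrix (Fin (d (q + 1))) (Fin (d q)) ℝ)
    (xv : (q : ℕ) → Fin (d q) → ℝ)
    (zv : (q : ℕ) → Fin (d (q + 1)) → ℝ)
    (hz : ∀ q < L, zv q = (W q).mulVec (xv q))
    (Dm : (q : ℕ) → Matrix (Fin (d (q + 1))) (Fin (d (q + 1))) ℝ)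
    (hD : ∀ q < L, Dm q = Matrix.diagonal fun i => if 0 ≤ zv q i then (1 : ℝ) else 0)
    (hxrec : ∀ q < L, xv (q + 1) = (Dm q).mulVec (zv q))
    (G : (q : ℕ) → Matrix (Fin (d L)) (Fin (d q)) ℝ)
    (hGL : G L = 1)
    (hG : ∀ q, q + 1 < L → G (q + 1) = G (q + 2) * W (q + 1) * Dm q)
    (Ft : Matrix ((ℓ : Fin L) × ((Fin (d (ℓ.1 + 1)) × Fin (d ℓ.1)) ⊕ Fin (d (ℓ.1 + 1))))
      (Fin (d L)) ℝ)
    (hFt1 : ∀ (ℓ : Fin L) (i : Fin (d (ℓ.1 + 1))) (a : Fin (d ℓ.1)) (j : Fin (d L)),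
      Ft ⟨ℓ, Sum.inl (i, a)⟩ j = (G (ℓ.1 + 1))ᵀ i j * xv ℓ.1 a)
    (hFt2 : ∀ (ℓ : Fin L) (i : Fin (d (ℓ.1 + 1))) (j : Fin (d L)),
      Ft ⟨ℓ, Sum.inr i⟩ j = (G (ℓ.1 + 1))ᵀ i j)
    (pv : Fin (d L) → ℝ) (hpv : ∀ j, 0 ≤ pv j) (hpsum : ∑ j, pv j = 1) :
    l2SpectralNorm (Ft * (Matrix.diagonal pv - Matrix.vecMulVec pv pv) * Ftᵀ) ≤
      Real.sqrt 2 * ∑ ℓ ∈ Finset.range L,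
        (eNorm (xv ℓ) ^ 2 + 1) * ∏ s ∈ Finset.Ico (ℓ + 1) L, l2SpectralNorm (W s) ^ 2 :=
  spectral_norm_G_term_hessian_blockwise_bound_general L d W xv zv Dm hD G hGL hG Ft hFt1 hFt2 pv
    hpv hpsum
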